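/- arXiv:1702.05881 — 3 statements merged into one kernel-verified Lean document; each statement's English description precedes it below -/
import Mathlib

section
/- Define the dimensionless entropy η(p,T) = -log p + 2 tanh⁻¹(α) + (5/2 + T_i/T)·α + (5/2) log T, where α = α(p,T) = (1 + κ p T^{-5/2} e^{T_i/T})^{-1/2}. Then ∂η/∂p at fixed T equals -((1+α)/p)·(1 + (α/2)(1-α)(5/2 + T_i/T)), which is ≤ -1/p < 0. -/
/-- Inverse hyperbolic tangent. -/
noncomputable def artanh (x : ℝ) : ℝ := (1 / 2) * Real.log ((1 + x) / (1 - x))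

/-- Saha ionization degree. -/
noncomputable def sahaAlpha (κ Ti p T : ℝ) : ℝ :=
  (1 + κ * p * T ^ (-(5/2) : ℝ) * Real.exp (Ti / T)) ^ (-(1/2) : ℝ)

/-- Dimensionless entropy η(p,T) = -log p + 2 tanh⁻¹ α + (5/2 + T_i/T)α + (5/2) log T. -/
noncomputable def eta (κ Ti p T : ℝ) : ℝ :=
  -Real.log p + 2 * artanh (sahaAlpha κ Ti p T) + (5/2 + Ti / T) * sahaAlpha κ Ti p T
    + (5/2) * Real.log T

/-!
At fixed `T`, `α = (1 + c p) ^ (-1/2)` with `c > 0` independent of `p`, so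
`dα/dp = -(c/2) α³ = -α (1 - α²) / (2p)` by `α² (1 + c p) = 1`. The factor `1 - α²` cancels the
derivative `1 / (1 - α²)` of `artanh`, which leaves the closed form; its second factor is at
least `1` because `0 < α < 1` and `T_i > 0`.
-/

lemma hasDerivAt_artanh {x : ℝ} (h1 : -1 < x) (h2 : x < 1) :
    HasDerivAt artanh (1 / (1 - x ^ 2)) x := by
  have hden : 1 - x ≠ 0 := by linarith
  have hratio : (1 + x) / (1 - x) ≠ 0 := (div_pos (by linarith) (by linarith)).ne'
  have h := ((((hasDerivAt_id x).const_add 1).div ((hasDerivAt_id x).const_sub 1) hden).log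
    hratio).const_mul (1 / 2 : ℝ)
  refine h.congr_deriv ?_
  have hden' : 1 + x ≠ 0 := by linarith
  have hsq : 1 - x ^ 2 ≠ 0 := by nlinarith
  simp only [id, Pi.div_apply]
  field_simp
  ring

lemma rpow_neg_half_sq {u : ℝ} (hu : 0 ≤ u) : (u ^ (-(1/2) : ℝ)) ^ 2 = u⁻¹ := by
  rw [← Real.rpow_natCast, ← Real.rpow_mul hu]
  norm_num [Real.rpow_neg_one]

lemma hasDerivAt_one_add_mul_rpow_neg_half {c p : ℝ} (hp : p ≠ 0) (hu : 0 < 1 + c * p) :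
    HasDerivAt (fun x => (1 + c * x) ^ (-(1/2) : ℝ))
      (-((1 + c * p) ^ (-(1/2) : ℝ) * (1 - ((1 + c * p) ^ (-(1/2) : ℝ)) ^ 2)) / (2 * p)) p := by
  have h := (((hasDerivAt_id p).const_mul c).const_add 1).rpow_const
    (p := (-(1/2) : ℝ)) (Or.inl hu.ne')
  refine h.congr_deriv ?_
  simp only [id]
  rw [Real.rpow_sub hu, Real.rpow_one, rpow_neg_half_sq hu.le]
  field_simp
  ring

noncomputable def sahaCoeff (κ Ti T : ℝ) : ℝ := κ * T ^ (-(5/2) : ℝ) * Real.exp (Ti / T)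

section Saha

variable {κ Ti p T : ℝ}

lemma sahaAlpha_eq_sahaCoeff (κ Ti p T : ℝ) :
    sahaAlpha κ Ti p T = (1 + sahaCoeff κ Ti T * p) ^ (-(1/2) : ℝ) := by
  rw [sahaAlpha, sahaCoeff]
  ring_nf

lemma sahaCoeff_nonneg (hκ : 0 ≤ κ) (hT : 0 ≤ T) : 0 ≤ sahaCoeff κ Ti T := by
  unfold sahaCoeff
  positivity

lemma sahaCoeff_pos (hκ : 0 < κ) (hT : 0 < T) : 0 < sahaCoeff κ Ti T := by
  unfold sahaCoeff
  positivity

lemma one_add_sahaCoeff_mul_pos (hκ : 0 ≤ κ) (hp : 0 ≤ p) (hT : 0 ≤ T) :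
    0 < 1 + sahaCoeff κ Ti T * p :=
  add_pos_of_pos_of_nonneg one_pos (mul_nonneg (sahaCoeff_nonneg hκ hT) hp)

lemma sahaAlpha_pos (hκ : 0 ≤ κ) (hp : 0 ≤ p) (hT : 0 ≤ T) : 0 < sahaAlpha κ Ti p T := by
  rw [sahaAlpha_eq_sahaCoeff]
  exact Real.rpow_pos_of_pos (one_add_sahaCoeff_mul_pos hκ hp hT) _

lemma sahaAlpha_lt_one (hκ : 0 < κ) (hp : 0 < p) (hT : 0 < T) : sahaAlpha κ Ti p T < 1 := by
  rw [sahaAlpha_eq_sahaCoeff]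
  exact Real.rpow_lt_one_of_one_lt_of_neg
    (lt_add_of_pos_right 1 (mul_pos (sahaCoeff_pos hκ hT) hp)) (by norm_num)

lemma hasDerivAt_sahaAlpha (hκ : 0 ≤ κ) (hp : 0 < p) (hT : 0 ≤ T) :
    HasDerivAt (fun p' => sahaAlpha κ Ti p' T)
      (-(sahaAlpha κ Ti p T * (1 - sahaAlpha κ Ti p T ^ 2)) / (2 * p)) p := by
  simp only [sahaAlpha_eq_sahaCoeff]
  exact hasDerivAt_one_add_mul_rpow_neg_half hp.ne' (one_add_sahaCoeff_mul_pos hκ hp.le hT)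

lemma hasDerivAt_eta_p (hκ : 0 < κ) (hp : 0 < p) (hT : 0 < T) :
    HasDerivAt (fun p' => eta κ Ti p' T)
      (-((1 + sahaAlpha κ Ti p T) / p) *
        (1 + (sahaAlpha κ Ti p T / 2) * (1 - sahaAlpha κ Ti p T) * (5/2 + Ti / T))) p := by
  have hα' := hasDerivAt_sahaAlpha (Ti := Ti) hκ.le hp hT.le
  set α := sahaAlpha κ Ti p T
  have hα0 : 0 < α := sahaAlpha_pos hκ.le hp.le hT.le
  have hα1 : α < 1 := sahaAlpha_lt_one hκ hp hT
  have h := ((((Real.hasDerivAt_log hp.ne').neg.add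
    (((hasDerivAt_artanh (by linarith) hα1).comp p hα').const_mul 2)).add
    (hα'.const_mul (5/2 + Ti / T))).add_const ((5/2) * Real.log T))
  refine h.congr_deriv ?_
  have h1 : 1 - α ^ 2 ≠ 0 := by nlinarith
  field_simp
  ring

end Saha

lemma neg_div_mul_one_add_le_neg_one_div {a A p : ℝ} (ha0 : 0 ≤ a) (ha1 : a ≤ 1) (hA : 0 ≤ A)
    (hp : 0 < p) :
    -((1 + a) / p) * (1 + (a / 2) * (1 - a) * A) ≤ -(1 / p) := by
  rw [neg_mul, neg_le_neg_iff, div_mul_eq_mul_div, div_le_div_iff_of_pos_right hp]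
  have := mul_nonneg (mul_nonneg ha0 (sub_nonneg.2 ha1)) hA
  nlinarith

/-- ∂η/∂p at fixed T equals -((1+α)/p)(1 + (α/2)(1-α)(5/2 + T_i/T)), which is ≤ -1/p < 0. -/
theorem eta_deriv_p (κ Ti p T : ℝ) (hκ : 0 < κ) (hTi : 0 < Ti)
    (hp : 0 < p) (hT : 0 < T) :
    HasDerivAt (fun p' : ℝ => eta κ Ti p' T)
      (-((1 + sahaAlpha κ Ti p T) / p) *
        (1 + (sahaAlpha κ Ti p T / 2) * (1 - sahaAlpha κ Ti p T) * (5/2 + Ti / T))) p ∧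
    -((1 + sahaAlpha κ Ti p T) / p) *
        (1 + (sahaAlpha κ Ti p T / 2) * (1 - sahaAlpha κ Ti p T) * (5/2 + Ti / T)) ≤ -(1 / p) ∧
    -(1 / p) < 0 :=
  ⟨hasDerivAt_eta_p hκ hp hT,
    neg_div_mul_one_add_le_neg_one_div (sahaAlpha_pos hκ.le hp.le hT.le).le
      (sahaAlpha_lt_one hκ hp hT).le (by positivity) hp,
    neg_neg_of_pos (one_div_pos.2 hp)⟩
end

section
/- Let T_i > 0, η₀ ∈ ℝ, and let α∞ ∈ (0,1) satisfy 2 log((1-α∞)/α∞) - (5/2)(1+α∞) + η₀ = 0. Define 𝒯(α) = (1+α)·T_i / d(α), where d(α) = 2 log((1-α)/α) - (5/2)(1+α) + η₀. Then 𝒯 is strictly positive and strictly monotone increasing on (0, α∞), 𝒯(α) → 0 as α → 0⁺, and 𝒯(α) → +∞ as α → α∞⁻. -/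
/-!
The denominator d is strictly decreasing on (0, 1), since both `log ((1 - α) / α)` and
`-(5/2)(1 + α)` are; hence it is positive to the left of its zero α∞, and the quotient of the
positive increasing numerator `(1 + α) T_i` by it is strictly increasing. Near 0 the term
`-2 log α` drives d to +∞, so 𝒯 → 0; at α∞ continuity gives d → 0⁺, so 𝒯 → +∞.
-/

open Filter Set Real Topology

section Quotient

variable {ι 𝕜 : Type*} [Preorder ι] [Field 𝕜] [LinearOrder 𝕜] [IsStrictOrderedRing 𝕜]

theorem StrictMonoOn.div_of_strictAntiOn {f g : ι → 𝕜} {s : Set ι} (hf : MonotoneOn f s)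
    (hg : StrictAntiOn g s) (hf0 : ∀ x ∈ s, 0 < f x) (hg0 : ∀ x ∈ s, 0 < g x) :
    StrictMonoOn (fun x => f x / g x) s := by
  intro a ha b hb hab
  calc f a / g a < f a / g b := div_lt_div_of_pos_left (hf0 a ha) (hg0 b hb) (hg ha hb hab)
    _ ≤ f b / g b := div_le_div_of_nonneg_right (hf ha hb hab.le) (hg0 b hb).le

variable [TopologicalSpace 𝕜] [OrderTopology 𝕜]

theorem Filter.Tendsto.div_tendsto_nhdsGT_zero {α : Type*} {l : Filter α} {f g : α → 𝕜} {c : 𝕜}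
    (hf : Tendsto f l (𝓝 c)) (hc : 0 < c) (hg : Tendsto g l (𝓝[>] 0)) :
    Tendsto (fun x => f x / g x) l atTop := by
  simpa only [div_eq_mul_inv, Pi.inv_apply] using hf.pos_mul_atTop hc hg.inv_tendsto_nhdsGT_zero

end Quotient

/-- The paper's d(α). -/
noncomputable def curveDenom (η₀ α : ℝ) : ℝ :=
  2 * log ((1 - α) / α) - (5/2) * (1 + α) + η₀

variable (η₀ : ℝ)

theorem curveDenom_strictAntiOn : StrictAntiOn (curveDenom η₀) (Ioo 0 1) := by
  intro a ha b hb hab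
  have hratio : (1 - b) / b < (1 - a) / a := by
    rw [div_lt_div_iff₀ hb.1 ha.1]
    nlinarith
  have hlog := log_lt_log (div_pos (by linarith [hb.2]) hb.1) hratio
  unfold curveDenom
  linarith

theorem curveDenom_pos {αInf α : ℝ} (hαInf : αInf < 1) (hzero : curveDenom η₀ αInf = 0)
    (hα : α ∈ Ioo 0 αInf) : 0 < curveDenom η₀ α :=
  hzero ▸ curveDenom_strictAntiOn η₀ ⟨hα.1, hα.2.trans hαInf⟩ ⟨hα.1.trans hα.2, hαInf⟩ hα.2

theorem tendsto_curveDenom_nhdsGT_zero : Tendsto (curveDenom η₀) (𝓝[>] 0) atTop := by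
  have hsplit : (fun α => 2 * log (1 - α) - (5/2) * (1 + α) + η₀ + (-2) * log α)
      =ᶠ[𝓝[>] 0] curveDenom η₀ := by
    filter_upwards [Ioo_mem_nhdsGT (zero_lt_one' ℝ)] with α hα
    rw [curveDenom, log_div (by linarith [hα.2]) hα.1.ne']
    ring
  have hregular : Tendsto (fun α => 2 * log (1 - α) - (5/2) * (1 + α) + η₀) (𝓝[>] 0)
      (𝓝 (2 * log (1 - 0) - (5/2) * (1 + 0) + η₀)) := by
    refine (ContinuousAt.tendsto ?_).mono_left nhdsWithin_le_nhds
    have : ContinuousAt (fun α : ℝ => log (1 - α)) 0 := ContinuousAt.log (by fun_prop) (by norm_num)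
    fun_prop
  exact (hregular.add_atTop (tendsto_log_nhdsGT_zero.const_mul_atBot_of_neg
    (by norm_num))).congr' hsplit

theorem continuousAt_curveDenom {α : ℝ} (h0 : α ≠ 0) (h1 : α ≠ 1) :
    ContinuousAt (curveDenom η₀) α := by
  have hratio : (1 - α) / α ≠ 0 := div_ne_zero (sub_ne_zero.mpr h1.symm) h0
  have : ContinuousAt (fun α : ℝ => log ((1 - α) / α)) α :=
    ContinuousAt.log (ContinuousAt.div (by fun_prop) (by fun_prop) h0) hratio
  unfold curveDenom
  fun_prop

theorem tendsto_curveDenom_nhdsLT {αInf : ℝ} (hαInf : αInf ∈ Ioo 0 1)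
    (hzero : curveDenom η₀ αInf = 0) : Tendsto (curveDenom η₀) (𝓝[<] αInf) (𝓝[>] 0) := by
  refine tendsto_nhdsWithin_of_tendsto_nhds_of_eventually_within _ ?_ ?_
  · have := (continuousAt_curveDenom η₀ hαInf.1.ne' hαInf.2.ne).tendsto
    rw [hzero] at this
    exact this.mono_left nhdsWithin_le_nhds
  · filter_upwards [Ioo_mem_nhdsLT hαInf.1] with α hα
    exact curveDenom_pos η₀ hαInf.2 hzero hα

open Filter Set in
/-- With d(α) = 2 log((1-α)/α) - (5/2)(1+α) + η₀ and α∞ ∈ (0,1) its zero, the function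
𝒯(α) = (1+α)T_i/d(α) is strictly positive and strictly increasing on (0, α∞),
tends to 0 as α → 0⁺ and to +∞ as α → α∞⁻. -/
theorem integral_curve_T (Ti η₀ αInf : ℝ) (hTi : 0 < Ti)
    (hαInf : αInf ∈ Set.Ioo (0 : ℝ) 1)
    (hzero : 2 * Real.log ((1 - αInf) / αInf) - (5/2) * (1 + αInf) + η₀ = 0) :
    (∀ α ∈ Set.Ioo (0 : ℝ) αInf,
      0 < (1 + α) * Ti / (2 * Real.log ((1 - α) / α) - (5/2) * (1 + α) + η₀)) ∧
    StrictMonoOn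
      (fun α : ℝ => (1 + α) * Ti / (2 * Real.log ((1 - α) / α) - (5/2) * (1 + α) + η₀))
      (Set.Ioo (0 : ℝ) αInf) ∧
    Tendsto
      (fun α : ℝ => (1 + α) * Ti / (2 * Real.log ((1 - α) / α) - (5/2) * (1 + α) + η₀))
      (nhdsWithin 0 (Set.Ioi 0)) (nhds 0) ∧
    Tendsto
      (fun α : ℝ => (1 + α) * Ti / (2 * Real.log ((1 - α) / α) - (5/2) * (1 + α) + η₀))
      (nhdsWithin αInf (Set.Iio αInf)) atTop := by
  have hd0 : curveDenom η₀ αInf = 0 := hzero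
  have hdpos : ∀ α ∈ Ioo 0 αInf, 0 < curveDenom η₀ α := fun α hα ↦
    curveDenom_pos η₀ hαInf.2 hd0 hα
  have hnum_pos : ∀ α ∈ Ioo 0 αInf, 0 < (1 + α) * Ti := fun α hα ↦
    mul_pos (by linarith [hα.1]) hTi
  have hnum : ∀ a : ℝ, Tendsto (fun α : ℝ => (1 + α) * Ti) (𝓝 a) (𝓝 ((1 + a) * Ti)) :=
    fun a ↦ (by fun_prop : Continuous fun α : ℝ => (1 + α) * Ti).tendsto a
  refine ⟨fun α hα ↦ div_pos (hnum_pos α hα) (hdpos α hα), ?_, ?_, ?_⟩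
  · exact StrictMonoOn.div_of_strictAntiOn (fun a _ b _ hab ↦ by gcongr)
      ((curveDenom_strictAntiOn η₀).mono (Ioo_subset_Ioo_right hαInf.2.le)) hnum_pos hdpos
  · exact ((hnum 0).mono_left nhdsWithin_le_nhds).div_atTop (tendsto_curveDenom_nhdsGT_zero η₀)
  · exact ((hnum αInf).mono_left nhdsWithin_le_nhds).div_tendsto_nhdsGT_zero
      (mul_pos (by linarith [hαInf.1]) hTi) (tendsto_curveDenom_nhdsLT η₀ hαInf hd0)
end

section
/- Let η(α,T) = -2 log((1-α)/α) + (1+α)(5/2 + T_i/T) on (0,1)×(0,∞), with second partials η_αα = 2(2α-1)/(α²(1-α)²), η_αT = -T_i/T², η_TT = 2T_i(1+α)/T³. If T_i/T ≤ 4, then the expression η_αα η_T² - 2 η_αT η_α η_T + η_TT η_α² is strictly positive, where η_α = 2/(α(1-α)) + 5/2 + T_i/T and η_T = -(1+α)T_i/T². -/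
/-- Convexity of the isentropes: if T_i/T ≤ 4, the expression
η_αα η_T² - 2 η_αT η_α η_T + η_TT η_α² is strictly positive, where the η-derivatives are
those of η(α,T) = -2 log((1-α)/α) + (1+α)(5/2 + T_i/T). -/
theorem isentrope_convexity (Ti α T : ℝ) (hTi : 0 < Ti)
    (h0 : 0 < α) (h1 : α < 1) (hT : 0 < T) (hTiT : Ti / T ≤ 4) :
    0 < (2 * (2 * α - 1) / (α ^ 2 * (1 - α) ^ 2)) * (-(1 + α) * Ti / T ^ 2) ^ 2
        - 2 * (-(Ti / T ^ 2)) * (2 / (α * (1 - α)) + 5/2 + Ti / T) * (-(1 + α) * Ti / T ^ 2)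
        + (2 * Ti * (1 + α) / T ^ 3) * (2 / (α * (1 - α)) + 5/2 + Ti / T) ^ 2 := by
  set s : ℝ := Ti / T with hs
  have hs0 : 0 < s := div_pos hTi hT
  have ha1 : 0 < 1 - α := by linarith
  have hC : 0 < 2 * (1 + α) * Ti / (α ^ 2 * (1 - α) ^ 2 * T ^ 3) := by positivity
  have hB : 0 < -(1 - 3*α - (5/2)*α^2*(1-α)^2) * s + 4*(1 + (5/4)*α*(1-α))^2 := by
    rcases le_or_gt (1 - 3*α - (5/2)*α^2*(1-α)^2) 0 with hc | hc
    · nlinarith [mul_nonneg (neg_nonneg.mpr hc) hs0.le, sq_nonneg (α*(1-α)), mul_pos h0 ha1]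
    · have h4 : (1 - 3*α - (5/2)*α^2*(1-α)^2) * s ≤ (1 - 3*α - (5/2)*α^2*(1-α)^2) * 4 := by
        exact mul_le_mul_of_nonneg_left hTiT hc.le
      nlinarith [sq_nonneg (α*(1-α)), mul_pos h0 ha1]
  have key : (2 * (2 * α - 1) / (α ^ 2 * (1 - α) ^ 2)) * (-(1 + α) * Ti / T ^ 2) ^ 2
        - 2 * (-(Ti / T ^ 2)) * (2 / (α * (1 - α)) + 5/2 + Ti / T) * (-(1 + α) * Ti / T ^ 2)
        + (2 * Ti * (1 + α) / T ^ 3) * (2 / (α * (1 - α)) + 5/2 + Ti / T) ^ 2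
      = (2 * (1 + α) * Ti / (α ^ 2 * (1 - α) ^ 2 * T ^ 3)) *
        (-(1 - 3*α - (5/2)*α^2*(1-α)^2) * s + 4*(1 + (5/4)*α*(1-α))^2) := by
    rw [hs]
    field_simp
    ring
  rw [key]
  exact mul_pos hC hB
end
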